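/- Let X ⊂ H(𝔻) be a Banach space containing the constants and satisfying conditions (I) and (IV), let v be any weight, φ an analytic selfmap of 𝔻 and g ∈ H(𝔻). Then T_g^φ maps X into B_v^0 and T_g^φ: X → B_v^0 is compact if and only if T_g^φ: X → B_v^∞ is compact and g∘φ ∈ B_v^0. -/

import Mathlib

noncomputable section

open Complex MeasureTheory Metric Set Filter Topology

/-- The open unit disc in `ℂ`. -/
def uDisc : Set ℂ := Metric.ball 0 1

/-- Functions on the disc carrying the topology of uniform convergence on compact
subsets of the disc (i.e. the compact-open topology on holomorphic functions). -/
abbrev CO : Type := UniformOnFun (↥uDisc) ℂ {K : Set (↥uDisc) | IsCompact K}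

/-- The canonical map sending a function on `ℂ` to its restriction to the disc,
viewed in the compact-open topology. -/
def toCO (f : ℂ → ℂ) : CO :=
  UniformOnFun.ofFun {K : Set (↥uDisc) | IsCompact K} (fun z => f z.1)

/-- The compact-open topology induced on an abstract space of analytic functions
via the inclusion `ι`. -/
def coTopOn {E : Type} (ι : E → (ℂ → ℂ)) : TopologicalSpace E :=
  TopologicalSpace.induced (fun x => toCO (ι x)) inferInstance

/-- Condition (I): the closed unit ball is compact in the compact-open topology. -/
def CondI {E : Type} [NormedAddCommGroup E] (ι : E → (ℂ → ℂ)) : Prop :=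
  IsCompact ((fun x => toCO (ι x)) '' Metric.closedBall (0 : E) 1)

/-- The norm of the evaluation functional `δ_z` on the space realized via `ι`. -/
def evalNorm {E : Type} [NormedAddCommGroup E] (ι : E → (ℂ → ℂ)) (z : ℂ) : ℝ :=
  sSup ((fun x => ‖ι x z‖) '' Metric.closedBall (0 : E) 1)

/-- Condition (II): the norms of the evaluation functionals blow up at the boundary. -/
def CondII {E : Type} [NormedAddCommGroup E] (ι : E → (ℂ → ℂ)) : Prop :=
  ∀ M : ℝ, ∃ s : ℝ, 0 ≤ s ∧ s < 1 ∧ ∀ z ∈ uDisc, s < ‖z‖ → M < evalNorm ι z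

/-- The dilation `f_r(z) = f (r z)`. -/
def dil (r : ℝ) (f : ℂ → ℂ) : ℂ → ℂ := fun z => f ((r : ℂ) * z)

/-- Condition (III): the dilation operators `T_r` act compactly on the space. -/
def CondIII {E : Type} [NormedAddCommGroup E] [NormedSpace ℂ E] (ι : E →ₗ[ℂ] (ℂ → ℂ)) : Prop :=
  ∀ r : ℝ, 0 < r → r < 1 → ∃ T : E →L[ℂ] E,
    (∀ x : E, Set.EqOn (ι (T x)) (dil r (ι x)) uDisc) ∧ IsCompactOperator (fun x : E => T x)

/-- Condition (IV): the dilation operators `T_r` are uniformly bounded on the space. -/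
def CondIV {E : Type} [NormedAddCommGroup E] [NormedSpace ℂ E] (ι : E →ₗ[ℂ] (ℂ → ℂ)) : Prop :=
  ∃ M : ℝ, ∀ r : ℝ, 0 < r → r < 1 → ∃ T : E →L[ℂ] E,
    (∀ x : E, Set.EqOn (ι (T x)) (dil r (ι x)) uDisc) ∧ ‖T‖ ≤ M

/-- Condition (V): multiplication by a bounded analytic function `u` is bounded on the
space, with norm controlled by `‖u‖_∞`. -/
def CondV {E : Type} [NormedAddCommGroup E] [NormedSpace ℂ E] (ι : E →ₗ[ℂ] (ℂ → ℂ)) : Prop :=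
  ∃ C : ℝ, 0 < C ∧ ∀ (u : ℂ → ℂ) (b : ℝ), DifferentiableOn ℂ u uDisc →
    (∀ z ∈ uDisc, ‖u z‖ ≤ b) →
    ∃ T : E →L[ℂ] E,
      (∀ x : E, Set.EqOn (ι (T x)) (fun z => u z * ι x z) uDisc) ∧ ‖T‖ ≤ C * b

/-- The set of values `v(z)|f(z)|`, `z ∈ 𝔻`. -/
def hvSet (v : ℂ → ℝ) (f : ℂ → ℂ) : Set ℝ := (fun z => v z * ‖f z‖) '' uDisc

/-- The norm of the weighted Banach space `H_v^∞`. -/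
def hvNorm (v : ℂ → ℝ) (f : ℂ → ℂ) : ℝ := sSup (hvSet v f)

/-- Membership in the weighted Banach space `H_v^∞`. -/
def memHvInf (v : ℂ → ℝ) (f : ℂ → ℂ) : Prop :=
  DifferentiableOn ℂ f uDisc ∧ BddAbove (hvSet v f)

/-- `F(z) → 0` as `|z| → 1⁻`. -/
def vanishBd (F : ℂ → ℝ) : Prop :=
  ∀ ε : ℝ, 0 < ε → ∃ s : ℝ, 0 ≤ s ∧ s < 1 ∧ ∀ z ∈ uDisc, s < ‖z‖ → F z < ε

/-- Membership in the space `H_v^0`. -/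
def memHv0 (v : ℂ → ℝ) (f : ℂ → ℂ) : Prop :=
  memHvInf v f ∧ vanishBd (fun z => v z * ‖f z‖)

/-- The set of values `v(z)|f'(z)|`, `z ∈ 𝔻`. -/
def bvSet (v : ℂ → ℝ) (f : ℂ → ℂ) : Set ℝ := (fun z => v z * ‖deriv f z‖) '' uDisc

/-- The norm of the Bloch-type space `B_v^∞`. -/
def bvNorm (v : ℂ → ℝ) (f : ℂ → ℂ) : ℝ := ‖f 0‖ + sSup (bvSet v f)

/-- Membership in the Bloch-type space `B_v^∞`. -/
def memBvInf (v : ℂ → ℝ) (f : ℂ → ℂ) : Prop :=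
  DifferentiableOn ℂ f uDisc ∧ BddAbove (bvSet v f)

/-- Membership in the little Bloch-type space `B_v^0`. -/
def memBv0 (v : ℂ → ℝ) (f : ℂ → ℂ) : Prop :=
  memBvInf v f ∧ vanishBd (fun z => v z * ‖deriv f z‖)

/-- A weight: continuous, strictly positive on `𝔻`, vanishing at the boundary. -/
def IsWeight (v : ℂ → ℝ) : Prop :=
  ContinuousOn v uDisc ∧ (∀ z ∈ uDisc, 0 < v z) ∧ vanishBd v

/-- A normal weight. -/
def IsNormalWeight (v : ℂ → ℝ) : Prop :=
  IsWeight v ∧ (∀ z ∈ uDisc, v z = v ((‖z‖ : ℝ) : ℂ)) ∧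
  (∀ r s : ℝ, 0 ≤ r → r ≤ s → s < 1 → v ((s : ℂ)) ≤ v ((r : ℂ))) ∧
  (∃ k : ℕ, 1 ≤ k ∧
    Filter.limsup (fun n : ℕ =>
        v ((((1 : ℝ) - (2 : ℝ) ^ (-(n : ℤ) - (k : ℤ)) : ℝ) : ℂ)) /
        v ((((1 : ℝ) - (2 : ℝ) ^ (-(n : ℤ)) : ℝ) : ℂ))) Filter.atTop < 1) ∧
  (∃ M : ℝ, ∀ n : ℕ,
    v ((((1 : ℝ) - (2 : ℝ) ^ (-(n : ℤ)) : ℝ) : ℂ)) /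
    v ((((1 : ℝ) - (2 : ℝ) ^ (-(n : ℤ) - 1) : ℝ) : ℂ)) ≤ M)

/-- The standard weight `v_α(z) = (1 - |z|²)^α`. -/
def stdWeight (α : ℝ) : ℂ → ℝ := fun z => (1 - ‖z‖ ^ 2) ^ α

/-- The classical Volterra operator `T_g f (w) = ∫₀^w f(ξ) g'(ξ) dξ`. -/
def volterra (g f : ℂ → ℂ) (w : ℂ) : ℂ :=
  w * ∫ t in (0:ℝ)..1, f ((t : ℂ) * w) * deriv g ((t : ℂ) * w)

/-- The generalized Volterra operator `T_g^φ f (z) = ∫₀^{φ(z)} f(ξ) g'(ξ) dξ`. -/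
def genVolterra (g φ f : ℂ → ℂ) : ℂ → ℂ := fun z => volterra g f (φ z)

/-- An analytic selfmap of the unit disc. -/
def IsSelfMap (φ : ℂ → ℂ) : Prop :=
  DifferentiableOn ℂ φ uDisc ∧ Set.MapsTo φ uDisc uDisc

/-- `E`, embedded in `H(𝔻)` by `ι`, is (isometrically) the Banach space of analytic
functions with membership predicate `mem` and norm `nrm`. -/
def RealizesSpace {E : Type} [NormedAddCommGroup E] [NormedSpace ℂ E]
    (ι : E →ₗ[ℂ] (ℂ → ℂ)) (mem : (ℂ → ℂ) → Prop) (nrm : (ℂ → ℂ) → ℝ) : Prop :=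
  (∀ x y : E, Set.EqOn (ι x) (ι y) uDisc → x = y) ∧
  (∀ x : E, mem (ι x)) ∧
  (∀ f : ℂ → ℂ, mem f → ∃ x : E, Set.EqOn (ι x) f uDisc) ∧
  (∀ x : E, ‖x‖ = nrm (ι x))

/-- The weak topology of a normed space. -/
def wkTop (Y : Type) [NormedAddCommGroup Y] [NormedSpace ℂ Y] : TopologicalSpace Y :=
  TopologicalSpace.induced (fun y : Y => (fun ℓ : Y →L[ℂ] ℂ => ℓ y)) Pi.topologicalSpace

/-- A map between normed spaces is weakly compact if the image of the closed unit ball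
is relatively compact in the weak topology. -/
def WeaklyCompactOn {X Y : Type} [NormedAddCommGroup X] [NormedAddCommGroup Y]
    [NormedSpace ℂ Y] (T : X → Y) : Prop :=
  @IsCompact Y (wkTop Y) (@closure Y (wkTop Y) (T '' Metric.closedBall (0 : X) 1))

/-- The essential norm of a bounded operator: the distance to the compact operators. -/
def essNorm {X Y : Type} [NormedAddCommGroup X] [NormedSpace ℂ X]
    [NormedAddCommGroup Y] [NormedSpace ℂ Y] (T : X →L[ℂ] Y) : ℝ :=
  sInf {c : ℝ | ∃ K : X →L[ℂ] Y, IsCompactOperator (fun x : X => K x) ∧ c = ‖T - K‖}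

/-- `limsup_{|φ(z)| → 1} F(z)` (with the convention that it is `0` when `sup |φ| < 1`). -/
def limsupAtBd (φ : ℂ → ℂ) (F : ℂ → ℝ) : ℝ :=
  sInf {M : ℝ | ∃ s : ℝ, 0 ≤ s ∧ s < 1 ∧ ∀ z ∈ uDisc, s < ‖φ z‖ → F z ≤ M}

/-- The set of integral means defining the Hardy norm. -/
def hpSet (p : ℝ) (f : ℂ → ℂ) : Set ℝ :=
  (fun r : ℝ => (2 * Real.pi)⁻¹ *
      ∫ θ in (0:ℝ)..(2 * Real.pi),
        ‖f ((r : ℂ) * Complex.exp ((θ : ℂ) * Complex.I))‖ ^ p) '' Set.Ico (0:ℝ) 1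

/-- The Hardy space norm. -/
def hpNorm (p : ℝ) (f : ℂ → ℂ) : ℝ := sSup (hpSet p f) ^ (1 / p)

/-- Membership in the Hardy space `H^p`. -/
def memHp (p : ℝ) (f : ℂ → ℂ) : Prop :=
  DifferentiableOn ℂ f uDisc ∧ BddAbove (hpSet p f)

/-- The Bergman integrand `|f(z)|^p (1-|z|²)^α`. -/
def bergFun (p α : ℝ) (f : ℂ → ℂ) : ℂ → ℝ :=
  fun z => ‖f z‖ ^ p * (1 - ‖z‖ ^ 2) ^ α

/-- The weighted Bergman space norm (with respect to normalized area measure). -/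
def bergNorm (p α : ℝ) (f : ℂ → ℂ) : ℝ :=
  (Real.pi⁻¹ * ∫ z in uDisc, bergFun p α f z) ^ (1 / p)

/-- Membership in the weighted Bergman space `A_α^p`. -/
def memBerg (p α : ℝ) (f : ℂ → ℂ) : Prop :=
  DifferentiableOn ℂ f uDisc ∧ MeasureTheory.IntegrableOn (bergFun p α f) uDisc

/-- The associated weight `ṽ` of a weight `v`. -/
def assocWeight (v : ℂ → ℝ) (z : ℂ) : ℝ :=
  (sSup ((fun f : ℂ → ℂ => ‖f z‖) ''
    {f : ℂ → ℂ | DifferentiableOn ℂ f uDisc ∧ ∀ w ∈ uDisc, v w * ‖f w‖ ≤ 1}))⁻¹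

/-- The space `H(𝔻)` of holomorphic functions on the disc, with the compact-open
topology. -/
def HolD : Type := {f : ℂ → ℂ // DifferentiableOn ℂ f uDisc}

instance : TopologicalSpace HolD :=
  TopologicalSpace.induced (fun f : HolD => toCO f.1) inferInstance

instance : Fact ((1 : ENNReal) ≤ ⊤) := ⟨le_top⟩

/-- The sequence space `ℓ^∞`. -/
abbrev ellInf : Type := lp (fun _ : ℕ => ℂ) ⊤

/-!
For `f ∈ X` the derivative of `T_g^φ f` is `f(φ) · (g ∘ φ)'`. Taking `f = 1` shows that
`g ∘ φ ∈ B_v^0` is necessary. Conversely, if `g ∘ φ ∈ B_v^0`, then `T_g^φ f_r ∈ B_v^0` for every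
dilation `f_r` with `r < 1`, because `f_r ∘ φ` is bounded. By (IV) the dilations `f_r` stay in a
ball of `X`, so compactness of `T_g^φ : X → B_v^∞` yields a sequence `r_n → 1` along which
`T_g^φ f_{r_n}` converges in `B_v^∞`. Point evaluation of the derivative is continuous on `B_v^∞`,
so the limit has the same derivative as `T_g^φ f`, and it lies in `B_v^0`, which is closed in
`B_v^∞`. Hence `T_g^φ` maps `X` into `B_v^0`, and it stays compact there since `B_v^0` sits
isometrically in `B_v^∞`.
-/

lemma IsCompactOperator.of_comp_isClosedEmbedding {M₁ M₂ M₃ : Type*} [Zero M₁]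
    [TopologicalSpace M₁] [TopologicalSpace M₂] [TopologicalSpace M₃] {f : M₁ → M₂} {j : M₂ → M₃}
    (hj : IsClosedEmbedding j) (h : IsCompactOperator (j ∘ f)) : IsCompactOperator f :=
  let ⟨K, hK, hKf⟩ := h
  ⟨j ⁻¹' K, hj.isCompact_preimage hK, hKf⟩

lemma LinearIsometry.exists_comp_eq_of_forall_mem_range {𝕜 X E F : Type*}
    [NontriviallyNormedField 𝕜] [SeminormedAddCommGroup X] [NormedSpace 𝕜 X]
    [SeminormedAddCommGroup E] [NormedSpace 𝕜 E] [NormedAddCommGroup F] [NormedSpace 𝕜 F]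
    (J : F →ₗᵢ[𝕜] E) (T : X →L[𝕜] E)
    (hT : ∀ x, T x ∈ LinearMap.range J.toLinearMap) :
    ∃ T' : X →L[𝕜] F, ∀ x, J (T' x) = T x := by
  choose T' hT' using hT
  have hJT' : ∀ x, J (T' x) = T x := hT'
  let T'ₗ : X →ₗ[𝕜] F :=
    { toFun := T'
      map_add' := fun x y => J.injective (by simp [hJT'])
      map_smul' := fun c x => J.injective (by simp [hJT']) }
  exact ⟨T'ₗ.mkContinuous ‖T‖ fun x => by simpa [← J.norm_map, hJT', T'ₗ] using T.le_opNorm x,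
    hJT'⟩

lemma isOpen_uDisc : IsOpen uDisc := isOpen_ball

lemma deriv_eq_of_eqOn_uDisc {f₁ f₂ : ℂ → ℂ} (h : EqOn f₁ f₂ uDisc) {z : ℂ} (hz : z ∈ uDisc) :
    deriv f₁ z = deriv f₂ z :=
  h.deriv isOpen_uDisc hz

lemma ofReal_mul_mem_ball {R t : ℝ} {w : ℂ} (hw : w ∈ ball (0 : ℂ) R) (ht : t ∈ Icc (0 : ℝ) 1) :
    (t : ℂ) * w ∈ ball (0 : ℂ) R := by
  simpa [Complex.real_smul] using
    (convex_ball (0 : ℂ) R).smul_mem_of_zero_mem (mem_ball_self (pos_of_mem_ball hw)) hw ht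

lemma hasDerivAt_mul_integral_segment {F : ℂ → ℂ} {R : ℝ} (hF : DifferentiableOn ℂ F (ball 0 R))
    {w : ℂ} (hw : w ∈ ball (0 : ℂ) R) :
    HasDerivAt (fun w => w * ∫ t in (0 : ℝ)..1, F ((t : ℂ) * w)) (F w) w := by
  obtain ⟨G, hG⟩ := hF.isExactOn_ball
  have hprim : ∀ u ∈ ball (0 : ℂ) R, u * ∫ t in (0 : ℝ)..1, F ((t : ℂ) * u) = G u - G 0 := by
    intro u hu
    have hcont : ContinuousOn (fun t : ℝ => F (0 + t • u)) (Icc 0 1) :=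
      hF.continuousOn.comp (by fun_prop) fun t ht => by
        simpa [Complex.real_smul] using ofReal_mul_mem_ball hu ht
    have hderiv : ∀ t ∈ Icc (0 : ℝ) 1, HasDerivAt G (F (0 + t • u)) (0 + t • u) := fun t ht =>
      hG _ (by simpa [Complex.real_smul] using ofReal_mul_mem_ball hu ht)
    simpa [Complex.real_smul] using intervalIntegral.integral_unitInterval_deriv_eq_sub hcont hderiv
  exact ((hG w hw).sub_const (G 0)).congr_of_eventuallyEq
    (eventually_of_mem (isOpen_ball.mem_nhds hw) hprim)

lemma vanishBd.congr {F G : ℂ → ℝ} (hF : vanishBd F) (hFG : EqOn F G uDisc) : vanishBd G := by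
  intro ε hε
  obtain ⟨s, hs0, hs1, hs⟩ := hF ε hε
  exact ⟨s, hs0, hs1, fun z hz hsz => hFG hz ▸ hs z hz hsz⟩

lemma vanishBd.of_le_mul {F G : ℂ → ℝ} (hG : vanishBd G) {C : ℝ} (hC : 0 < C)
    (hFG : ∀ z ∈ uDisc, F z ≤ C * G z) : vanishBd F := by
  intro ε hε
  obtain ⟨s, hs0, hs1, hs⟩ := hG (ε / C) (div_pos hε hC)
  refine ⟨s, hs0, hs1, fun z hz hsz => (hFG z hz).trans_lt ?_⟩
  calc C * G z < C * (ε / C) := mul_lt_mul_of_pos_left (hs z hz hsz) hC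
    _ = ε := mul_div_cancel₀ ε hC.ne'

lemma memBv0.of_deriv_eqOn {v : ℂ → ℝ} {f₁ f₂ : ℂ → ℂ} (hf₁ : memBv0 v f₁)
    (hf₂ : DifferentiableOn ℂ f₂ uDisc) (h : EqOn (deriv f₁) (deriv f₂) uDisc) :
    memBv0 v f₂ := by
  have hset : bvSet v f₁ = bvSet v f₂ := image_congr fun z hz => by rw [h hz]
  exact ⟨⟨hf₂, hset ▸ hf₁.1.2⟩, hf₁.2.congr fun z hz => by simp only [h hz]⟩

lemma bvNorm_congr {v : ℂ → ℝ} {f₁ f₂ : ℂ → ℂ} (h : EqOn f₁ f₂ uDisc) :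
    bvNorm v f₁ = bvNorm v f₂ := by
  have hset : bvSet v f₁ = bvSet v f₂ :=
    image_congr fun z hz => by rw [deriv_eq_of_eqOn_uDisc h hz]
  rw [bvNorm, bvNorm, hset, h (mem_ball_self one_pos)]

lemma RealizesSpace.exists_linearIsometry {E F : Type} [NormedAddCommGroup E] [NormedSpace ℂ E]
    [NormedAddCommGroup F] [NormedSpace ℂ F] {ιE : E →ₗ[ℂ] (ℂ → ℂ)} {ιF : F →ₗ[ℂ] (ℂ → ℂ)}
    {memE memF : (ℂ → ℂ) → Prop} {nrm : (ℂ → ℂ) → ℝ} (hE : RealizesSpace ιE memE nrm)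
    (hF : RealizesSpace ιF memF nrm) (hmem : ∀ f, memF f → memE f)
    (hnrm : ∀ f₁ f₂, EqOn f₁ f₂ uDisc → nrm f₁ = nrm f₂) :
    ∃ J : F →ₗᵢ[ℂ] E, ∀ y, EqOn (ιE (J y)) (ιF y) uDisc := by
  choose J hJ using fun y => hE.2.2.1 _ (hmem _ (hF.2.1 y))
  let Jₗ : F →ₗ[ℂ] E :=
    { toFun := J
      map_add' := fun y y' => hE.1 _ _ fun z hz => by simp [hJ _ hz]
      map_smul' := fun c y => hE.1 _ _ fun z hz => by simp [hJ _ hz] }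
  exact ⟨⟨Jₗ, fun y => (hE.2.2.2 (J y)).trans ((hnrm _ _ (hJ y)).trans (hF.2.2.2 y).symm)⟩, hJ⟩

section BlochSpace

variable {E : Type} [NormedAddCommGroup E] [NormedSpace ℂ E] {ιE : E →ₗ[ℂ] (ℂ → ℂ)}
  {v : ℂ → ℝ} (hmem : ∀ e : E, memBvInf v (ιE e)) (hnorm : ∀ e : E, ‖e‖ = bvNorm v (ιE e))
include hmem hnorm

lemma mul_norm_deriv_le_norm (e : E) {z : ℂ} (hz : z ∈ uDisc) :
    v z * ‖deriv (ιE e) z‖ ≤ ‖e‖ := by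
  rw [hnorm, bvNorm]
  linarith [le_csSup (hmem e).2 (mem_image_of_mem _ hz), norm_nonneg (ιE e 0)]

lemma mul_norm_deriv_sub_le_norm_sub (e e' : E) {z : ℂ} (hz : z ∈ uDisc) :
    v z * ‖deriv (ιE e) z - deriv (ιE e') z‖ ≤ ‖e - e'‖ := by
  have hd : ∀ e : E, DifferentiableAt ℂ (ιE e) z := fun e =>
    (hmem e).1.differentiableAt (isOpen_uDisc.mem_nhds hz)
  have hsub : deriv (ιE (e - e')) z = deriv (ιE e) z - deriv (ιE e') z := by
    rw [map_sub]
    exact deriv_sub (hd e) (hd e')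
  exact hsub ▸ mul_norm_deriv_le_norm hmem hnorm (e - e') hz

lemma tendsto_deriv_apply {ι : Type*} {l : Filter ι} {b : ι → E} {a : E}
    (hv : ∀ z ∈ uDisc, 0 < v z) (hb : Tendsto b l (𝓝 a)) {z : ℂ} (hz : z ∈ uDisc) :
    Tendsto (fun i => deriv (ιE (b i)) z) l (𝓝 (deriv (ιE a) z)) := by
  have hvz := hv z hz
  rw [tendsto_iff_norm_sub_tendsto_zero] at hb ⊢
  refine squeeze_zero (fun _ => norm_nonneg _) (fun i => ?_) (by simpa using hb.div_const (v z))
  rw [le_div_iff₀ hvz, mul_comm]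
  exact mul_norm_deriv_sub_le_norm_sub hmem hnorm _ _ hz

lemma isClosed_setOf_vanishBd_deriv (hv : ∀ z ∈ uDisc, 0 < v z) :
    IsClosed {e : E | vanishBd fun z => v z * ‖deriv (ιE e) z‖} := by
  refine isClosed_of_closure_subset fun e he ε hε => ?_
  obtain ⟨e', he', hee'⟩ := Metric.mem_closure_iff.1 he (ε / 2) (half_pos hε)
  obtain ⟨s, hs0, hs1, hs⟩ := he' (ε / 2) (half_pos hε)
  refine ⟨s, hs0, hs1, fun z hz hsz => ?_⟩
  have hclose := mul_norm_deriv_sub_le_norm_sub hmem hnorm e e' hz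
  have hsmall : v z * ‖deriv (ιE e') z‖ < ε / 2 := hs z hz hsz
  rw [← dist_eq_norm e e'] at hclose
  calc v z * ‖deriv (ιE e) z‖
      ≤ v z * ‖deriv (ιE e) z - deriv (ιE e') z‖ + v z * ‖deriv (ιE e') z‖ := by
        rw [← mul_add]
        exact mul_le_mul_of_nonneg_left (norm_le_norm_sub_add _ _) (hv z hz).le
    _ < ε := by linarith

lemma vanishBd_deriv_of_tendsto_deriv (hv : ∀ z ∈ uDisc, 0 < v z) {K : Set E} (hK : IsCompact K)
    {b : ℕ → E} (hbK : ∀ n, b n ∈ K) (hb : ∀ n, vanishBd fun z => v z * ‖deriv (ιE (b n)) z‖)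
    {f : ℂ → ℂ} (hf : ∀ z ∈ uDisc, Tendsto (fun n => deriv (ιE (b n)) z) atTop (𝓝 (deriv f z))) :
    vanishBd fun z => v z * ‖deriv f z‖ := by
  obtain ⟨a, -, ψ, hψ, ha⟩ := hK.tendsto_subseq hbK
  have haB : vanishBd fun z => v z * ‖deriv (ιE a) z‖ :=
    (isClosed_setOf_vanishBd_deriv hmem hnorm hv).mem_of_tendsto ha
      (Eventually.of_forall fun k => hb (ψ k))
  refine haB.congr fun z hz => ?_
  simp only [tendsto_nhds_unique (tendsto_deriv_apply hmem hnorm hv ha hz)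
    ((hf z hz).comp hψ.tendsto_atTop)]

end BlochSpace

lemma exists_norm_dil_le {f : ℂ → ℂ} (hf : ContinuousOn f uDisc) {r : ℝ} (hr0 : 0 ≤ r)
    (hr1 : r < 1) : ∃ C, ∀ z ∈ uDisc, ‖dil r f z‖ ≤ C := by
  have hball : closedBall (0 : ℂ) r ⊆ uDisc := closedBall_subset_ball hr1
  obtain ⟨C, hC⟩ := (isCompact_closedBall (0 : ℂ) r).exists_bound_of_continuousOn (hf.mono hball)
  refine ⟨C, fun z hz => hC _ ?_⟩
  rw [mem_closedBall_zero_iff, norm_mul, norm_real, Real.norm_of_nonneg hr0]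
  exact mul_le_of_le_one_right hr0 (mem_ball_zero_iff.1 hz).le

lemma tendsto_dil_apply {ι : Type*} {l : Filter ι} {r : ι → ℝ} (hr : Tendsto r l (𝓝 1))
    {f : ℂ → ℂ} {w : ℂ} (hf : ContinuousAt f w) : Tendsto (fun i => dil (r i) f w) l (𝓝 (f w)) :=
  hf.tendsto.comp (by simpa using ((continuous_ofReal.tendsto 1).comp hr).mul_const w)

section GenVolterra

variable {g φ f : ℂ → ℂ} {v : ℂ → ℝ}

lemma hasDerivAt_volterra (hg : DifferentiableOn ℂ g uDisc) (hf : DifferentiableOn ℂ f uDisc)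
    {w : ℂ} (hw : w ∈ uDisc) : HasDerivAt (volterra g f) (f w * deriv g w) w :=
  hasDerivAt_mul_integral_segment (F := fun ξ => f ξ * deriv g ξ) (hf.mul (hg.deriv isOpen_uDisc))
    hw

lemma hasDerivAt_genVolterra (hg : DifferentiableOn ℂ g uDisc) (hφ : IsSelfMap φ)
    (hf : DifferentiableOn ℂ f uDisc) {z : ℂ} (hz : z ∈ uDisc) :
    HasDerivAt (genVolterra g φ f) (f (φ z) * deriv (fun z => g (φ z)) z) z := by
  have hφz : HasDerivAt φ (deriv φ z) z :=
    (hφ.1.differentiableAt (isOpen_uDisc.mem_nhds hz)).hasDerivAt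
  have hgφz : HasDerivAt g (deriv g (φ z)) (φ z) :=
    (hg.differentiableAt (isOpen_uDisc.mem_nhds (hφ.2 hz))).hasDerivAt
  rw [show deriv (fun z => g (φ z)) z = _ from (hgφz.comp z hφz).deriv, ← mul_assoc]
  exact (hasDerivAt_volterra hg hf (hφ.2 hz)).comp z hφz

lemma deriv_of_eqOn_genVolterra (hg : DifferentiableOn ℂ g uDisc) (hφ : IsSelfMap φ)
    (hf : DifferentiableOn ℂ f uDisc) {F : ℂ → ℂ} (hF : EqOn F (genVolterra g φ f) uDisc)
    {z : ℂ} (hz : z ∈ uDisc) : deriv F z = f (φ z) * deriv (fun z => g (φ z)) z :=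
  (deriv_eq_of_eqOn_uDisc hF hz).trans (hasDerivAt_genVolterra hg hφ hf hz).deriv

lemma memBv0_comp_of_eqOn_genVolterra_one (hg : DifferentiableOn ℂ g uDisc) (hφ : IsSelfMap φ)
    (hf : EqOn f (fun _ => 1) uDisc) {F : ℂ → ℂ} (hF : memBv0 v F)
    (hFf : EqOn F (genVolterra g φ f) uDisc) : memBv0 v fun z => g (φ z) :=
  hF.of_deriv_eqOn (hg.comp hφ.1 hφ.2) fun z hz => by
    rw [deriv_of_eqOn_genVolterra hg hφ ((differentiableOn_const 1).congr hf) hFf hz,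
      hf (hφ.2 hz), one_mul]

lemma vanishBd_deriv_genVolterra_of_bounded (hv : ∀ z ∈ uDisc, 0 < v z)
    (hg : DifferentiableOn ℂ g uDisc) (hφ : IsSelfMap φ) (hf : DifferentiableOn ℂ f uDisc)
    {C : ℝ} (hC : ∀ z ∈ uDisc, ‖f z‖ ≤ C)
    (hgφ : vanishBd fun z => v z * ‖deriv (fun z => g (φ z)) z‖) :
    vanishBd fun z => v z * ‖deriv (genVolterra g φ f) z‖ := by
  refine hgφ.of_le_mul (C := |C| + 1) (by positivity) fun z hz => ?_
  rw [deriv_of_eqOn_genVolterra hg hφ hf (fun _ _ => rfl) hz, norm_mul, mul_left_comm]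
  exact mul_le_mul_of_nonneg_right (by linarith [hC _ (hφ.2 hz), le_abs_self C])
    (mul_nonneg (hv z hz).le (norm_nonneg _))

end GenVolterra

theorem vanishBd_deriv_of_isCompactOperator_genVolterra {X E : Type} [NormedAddCommGroup X]
    [NormedSpace ℂ X] [NormedAddCommGroup E] [NormedSpace ℂ E] {ιX : X →ₗ[ℂ] (ℂ → ℂ)}
    {ιE : E →ₗ[ℂ] (ℂ → ℂ)} {v : ℂ → ℝ} {g φ : ℂ → ℂ} (hv : ∀ z ∈ uDisc, 0 < v z)
    (hmem : ∀ e : E, memBvInf v (ιE e)) (hnorm : ∀ e : E, ‖e‖ = bvNorm v (ιE e))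
    (hXhol : ∀ x : X, DifferentiableOn ℂ (ιX x) uDisc) (hIV : CondIV ιX)
    (hg : DifferentiableOn ℂ g uDisc) (hφ : IsSelfMap φ)
    (hgφ : vanishBd fun z => v z * ‖deriv (fun z => g (φ z)) z‖) (T : X →L[ℂ] E)
    (hT : ∀ x, EqOn (ιE (T x)) (genVolterra g φ (ιX x)) uDisc) (hTc : IsCompactOperator T)
    (x : X) : vanishBd fun z => v z * ‖deriv (ιE (T x)) z‖ := by
  obtain ⟨M, hM⟩ := hIV
  obtain ⟨r, -, hr, hr1⟩ := exists_seq_strictMono_tendsto' (zero_lt_one' ℝ)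
  choose R hR hRM using fun n => hM (r n) (hr n).1 (hr n).2
  obtain ⟨K, hK, hTK⟩ := hTc.image_closedBall_subset_compact (f := (T : X →ₗ[ℂ] E)) (M * ‖x‖)
  have hderiv : ∀ y, ∀ z ∈ uDisc, deriv (ιE (T y)) z = ιX y (φ z) * deriv (fun z => g (φ z)) z :=
    fun y z hz => deriv_of_eqOn_genVolterra hg hφ (hXhol y) (hT y) hz
  refine vanishBd_deriv_of_tendsto_deriv hmem hnorm hv hK (b := fun n => T (R n x))
    (fun n => hTK ⟨R n x, ?_, rfl⟩) (fun n => ?_) fun z hz => ?_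
  · exact mem_closedBall_zero_iff.2 ((R n).le_of_opNorm_le (hRM n) x)
  · obtain ⟨C, hC⟩ := exists_norm_dil_le (hXhol x).continuousOn (hr n).1.le (hr n).2
    refine (vanishBd_deriv_genVolterra_of_bounded hv hg hφ (hXhol (R n x))
      (fun z hz => hR n x hz ▸ hC z hz) hgφ).congr fun z hz => ?_
    simp only [deriv_eq_of_eqOn_uDisc (hT _) hz]
  · simp only [hderiv _ z hz, hR _ x (hφ.2 hz)]
    exact (tendsto_dil_apply hr1
      ((hXhol x).continuousOn.continuousAt (isOpen_uDisc.mem_nhds (hφ.2 hz)))).mul_const _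

theorem genVolterra_compact_to_Bv0_iff_general
    {X E F : Type} [NormedAddCommGroup X] [NormedSpace ℂ X]
    [NormedAddCommGroup E] [NormedSpace ℂ E]
    [NormedAddCommGroup F] [NormedSpace ℂ F] [CompleteSpace F]
    (ιX : X →ₗ[ℂ] (ℂ → ℂ))
    (hXhol : ∀ x : X, DifferentiableOn ℂ (ιX x) uDisc)
    (hXconst : ∀ c : ℂ, ∃ x : X, Set.EqOn (ιX x) (fun _ => c) uDisc)
    (hIV : CondIV ιX)
    (v : ℂ → ℝ) (hv : IsWeight v)
    (ιE : E →ₗ[ℂ] (ℂ → ℂ)) (hE : RealizesSpace ιE (memBvInf v) (bvNorm v))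
    (ιF : F →ₗ[ℂ] (ℂ → ℂ)) (hF : RealizesSpace ιF (memBv0 v) (bvNorm v))
    (g φ : ℂ → ℂ) (hg : DifferentiableOn ℂ g uDisc) (hφ : IsSelfMap φ) :
    (∃ T : X →L[ℂ] F, (∀ x : X, Set.EqOn (ιF (T x)) (genVolterra g φ (ιX x)) uDisc) ∧
        IsCompactOperator (fun x : X => T x)) ↔
    ((∃ T : X →L[ℂ] E, (∀ x : X, Set.EqOn (ιE (T x)) (genVolterra g φ (ιX x)) uDisc) ∧
        IsCompactOperator (fun x : X => T x)) ∧
      memBv0 v (fun z => g (φ z))) := by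
  obtain ⟨J, hJ⟩ := hE.exists_linearIsometry hF (fun _ hf => hf.1) fun _ _ => bvNorm_congr
  constructor
  · rintro ⟨T, hT, hTc⟩
    obtain ⟨x₁, hx₁⟩ := hXconst 1
    exact ⟨⟨J.toContinuousLinearMap.comp T, fun x => (hJ (T x)).trans (hT x),
      hTc.continuous_comp J.continuous⟩,
      memBv0_comp_of_eqOn_genVolterra_one hg hφ hx₁ (hF.2.1 (T x₁)) (hT x₁)⟩
  · rintro ⟨⟨T, hT, hTc⟩, hgφ⟩
    have hTB0 : ∀ x, memBv0 v (ιE (T x)) := fun x => ⟨hE.2.1 (T x),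
      vanishBd_deriv_of_isCompactOperator_genVolterra hv.2.1 hE.2.1 hE.2.2.2 hXhol hIV hg hφ hgφ.2
        T hT hTc x⟩
    have hrange : ∀ x, T x ∈ LinearMap.range J.toLinearMap := fun x =>
      let ⟨y, hy⟩ := hF.2.2.1 _ (hTB0 x)
      ⟨y, hE.1 _ _ ((hJ y).trans hy)⟩
    obtain ⟨T', hJT'⟩ := J.exists_comp_eq_of_forall_mem_range T hrange
    refine ⟨T', fun x => ?_, ?_⟩
    · exact (hJ (T' x)).symm.trans (hJT' x ▸ hT x)
    · exact .of_comp_isClosedEmbedding J.isometry.isClosedEmbedding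
        (by simpa only [Function.comp_def, hJT'] using hTc)

/-- For `X ⊂ H(𝔻)` satisfying (I) and (IV) and any weight `v`:
`T_g^φ` maps `X` into `B_v^0` compactly iff `T_g^φ : X → B_v^∞` is compact and
`g ∘ φ ∈ B_v^0`. -/
theorem genVolterra_compact_to_Bv0_iff
    {X E F : Type} [NormedAddCommGroup X] [NormedSpace ℂ X] [CompleteSpace X]
    [NormedAddCommGroup E] [NormedSpace ℂ E] [CompleteSpace E]
    [NormedAddCommGroup F] [NormedSpace ℂ F] [CompleteSpace F]
    (ιX : X →ₗ[ℂ] (ℂ → ℂ))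
    (hXinj : ∀ x y : X, Set.EqOn (ιX x) (ιX y) uDisc → x = y)
    (hXhol : ∀ x : X, DifferentiableOn ℂ (ιX x) uDisc)
    (hXconst : ∀ c : ℂ, ∃ x : X, Set.EqOn (ιX x) (fun _ => c) uDisc)
    (hI : CondI (fun x : X => ιX x)) (hIV : CondIV ιX)
    (v : ℂ → ℝ) (hv : IsWeight v)
    (ιE : E →ₗ[ℂ] (ℂ → ℂ)) (hE : RealizesSpace ιE (memBvInf v) (bvNorm v))
    (ιF : F →ₗ[ℂ] (ℂ → ℂ)) (hF : RealizesSpace ιF (memBv0 v) (bvNorm v))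
    (g φ : ℂ → ℂ) (hg : DifferentiableOn ℂ g uDisc) (hφ : IsSelfMap φ) :
    (∃ T : X →L[ℂ] F, (∀ x : X, Set.EqOn (ιF (T x)) (genVolterra g φ (ιX x)) uDisc) ∧
        IsCompactOperator (fun x : X => T x)) ↔
    ((∃ T : X →L[ℂ] E, (∀ x : X, Set.EqOn (ιE (T x)) (genVolterra g φ (ιX x)) uDisc) ∧
        IsCompactOperator (fun x : X => T x)) ∧
      memBv0 v (fun z => g (φ z))) :=
  genVolterra_compact_to_Bv0_iff_general ιX hXhol hXconst hIV v hv ιE hE ιF hF g φ hg hφ
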